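/- Let R be a commutative ring, n ≥ 3, and I an ideal of R. Then the relative elementary subgroup E(n,R,I) is a normal subgroup of GL(n,R). -/

import Mathlib

open Matrix

/-- The elementary transvection `t_{ij}(c) = 1 + c e_{ij}` as an element of `GL(n,R)`. -/
def transvectionGL (R : Type*) [CommRing R] (N : ℕ) (i j : Fin N) (hij : i ≠ j) (c : R) :
    GL (Fin N) R :=
  ⟨Matrix.transvection i j c, Matrix.transvection i j (-c),
    by rw [Matrix.transvection_mul_transvection_same i j hij, add_neg_cancel,
      Matrix.transvection_zero],
    by rw [Matrix.transvection_mul_transvection_same i j hij, neg_add_cancel,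
      Matrix.transvection_zero]⟩

/-- `E(n,I)`: the subgroup of `GL(n,R)` generated by the elementary transvections
`t_{ij}(c)` with `c ∈ I`, `i ≠ j`. -/
def elementarySubgroup (R : Type*) [CommRing R] (N : ℕ) (I : Ideal R) :
    Subgroup (GL (Fin N) R) :=
  Subgroup.closure
    { g | ∃ (i j : Fin N) (hij : i ≠ j) (c : R), c ∈ I ∧ g = transvectionGL R N i j hij c }

/-- `E(n,R,I)`: the relative elementary subgroup of level `I`, the normal closure of
`E(n,I)` in the (absolute) elementary group `E(n,R) = E(n, (⊤ : Ideal R))`. -/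
def relativeElementarySubgroup (R : Type*) [CommRing R] (N : ℕ) (I : Ideal R) :
    Subgroup (GL (Fin N) R) :=
  Subgroup.closure
    { g | ∃ e ∈ elementarySubgroup R N I, ∃ u ∈ elementarySubgroup R N (⊤ : Ideal R),
        g = u * e * u⁻¹ }

/-- `GL(n,R,I)`: the principal congruence subgroup of level `I`, the kernel of the
reduction homomorphism `GL(n,R) → GL(n,R/I)`. -/
def congruenceSubgroup (R : Type*) [CommRing R] (N : ℕ) (I : Ideal R) :
    Subgroup (GL (Fin N) R) :=
  (Units.map ((Ideal.Quotient.mk I).mapMatrix.toMonoidHom :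
    Matrix (Fin N) (Fin N) R →* Matrix (Fin N) (Fin N) (R ⧸ I))).ker

/-!
Conjugating `t_{ij}(c)` by `g` gives `1 + v wᵀ` with `v = g e_i` unimodular (`u ⬝ᵥ v = 1` for
`u = e_i g⁻¹`) and `w = c e_j g⁻¹ ∈ Iⁿ` orthogonal to `v`. Every `w ⊥ v` is a combination
`∑ b_{pq} (v_p e_q - v_q e_p)` of Koszul vectors, and the matrices `v w'ᵀ` with `w' ⊥ v` multiply
to zero, so `1 + v wᵀ` is the product of the `1 + v (b (v_p e_q - v_q e_p))ᵀ` with `b ∈ I`.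
For these, Suslin's trick uses a third index `k` (this is where `n ≥ 3` enters): with
`r = v_p e_q - v_q e_p`, splitting off `s = v_p e_p + v_q e_q` from `v` leaves a factor in
`E(n,I)`, and `1 + s (b r)ᵀ = [1 + s (b e_k)ᵀ, 1 + e_k rᵀ]` is the commutator of an element of
`E(n,I)` with one of `E(n,R)`.
-/

theorem one_add_sum_mem_of_mul_eq_zero {A ι : Type*} [Semiring A] {S : Submonoid A}
    (s : Finset ι) (X : ι → A) (hX : ∀ a ∈ s, ∀ b ∈ s, X a * X b = 0) (h : ∀ a ∈ s, 1 + X a ∈ S) :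
    1 + ∑ a ∈ s, X a ∈ S := by
  classical
  induction s using Finset.induction_on with
  | empty => simp
  | insert a s ha ih =>
    have hcross : X a * ∑ b ∈ s, X b = 0 := by
      rw [Finset.mul_sum]
      exact Finset.sum_eq_zero fun b hb =>
        hX a (Finset.mem_insert_self a s) b (Finset.mem_insert_of_mem hb)
    have hprod : (1 + X a) * (1 + ∑ b ∈ s, X b) = 1 + ∑ b ∈ insert a s, X b := by
      rw [Finset.sum_insert ha, mul_add, mul_one, add_mul, one_mul, hcross, add_zero,
        add_assoc]
    rw [← hprod]
    refine S.mul_mem (h a (Finset.mem_insert_self a s)) (ih (fun b hb c hc => ?_) fun b hb => ?_)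
    · exact hX b (Finset.mem_insert_of_mem hb) c (Finset.mem_insert_of_mem hc)
    · exact h b (Finset.mem_insert_of_mem hb)

theorem commutator_one_add_one_add {A : Type*} [Ring A] {X Y : A} (hX : X * X = 0)
    (hY : Y * Y = 0) (hYX : Y * X = 0) : (1 + X) * (1 + Y) * (1 - X) * (1 - Y) = 1 + X * Y := by
  noncomm_ring
  simp [← mul_assoc, hX, hY, hYX]

namespace Subgroup

def valSubmonoid {M : Type*} [Monoid M] (H : Subgroup Mˣ) : Submonoid M :=
  H.toSubmonoid.map (Units.coeHom M)

variable {M : Type*} [Monoid M] {H K : Subgroup Mˣ}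

theorem mem_valSubmonoid {x : M} : x ∈ H.valSubmonoid ↔ ∃ g ∈ H, (g : M) = x :=
  Submonoid.mem_map

theorem val_mem_valSubmonoid {g : Mˣ} (hg : g ∈ H) : (g : M) ∈ H.valSubmonoid :=
  Submonoid.mem_map_of_mem _ hg

theorem mem_of_val_mem_valSubmonoid {g : Mˣ} (hg : (g : M) ∈ H.valSubmonoid) : g ∈ H := by
  obtain ⟨g', hg', hval⟩ := mem_valSubmonoid.mp hg
  rwa [← Units.ext hval]

theorem valSubmonoid_mono (hHK : H ≤ K) : H.valSubmonoid ≤ K.valSubmonoid :=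
  Submonoid.monotone_map hHK

end Subgroup

theorem vecMulVec_sum {R m n ι : Type*} [NonUnitalNonAssocSemiring R] (v : m → R) (s : Finset ι)
    (w : ι → n → R) : vecMulVec v (∑ t ∈ s, w t) = ∑ t ∈ s, vecMulVec v (w t) := by
  ext a b
  simp only [vecMulVec_apply, Finset.sum_apply, Matrix.sum_apply, Finset.mul_sum]

section Vectors

variable {R n : Type*} [CommRing R] [Fintype n] [DecidableEq n]

theorem mul_transvection_mul_eq {g h : Matrix n n R} (hgh : g * h = 1) (i j : n) (c : R) :
    g * transvection i j c * h =
      1 + vecMulVec (g *ᵥ Pi.single i 1) (c • (Pi.single j 1 ᵥ* h)) := by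
  have hsingle : single i j c = c • vecMulVec (Pi.single i 1) (Pi.single j 1) := by
    rw [← single_eq_single_vecMulVec_single, smul_single, smul_eq_mul, mul_one]
  rw [transvection, mul_add, add_mul, mul_one, hgh, hsingle, mul_smul_comm, smul_mul_assoc,
    mul_vecMulVec, vecMulVec_mul, vecMulVec_smul]

theorem dotProduct_koszul_eq_zero (v : n → R) (p q : n) :
    (v p • Pi.single q 1 - v q • Pi.single p 1 : n → R) ⬝ᵥ v = 0 := by
  simp only [sub_dotProduct, smul_dotProduct, single_dotProduct, smul_eq_mul]
  ring

theorem eq_sum_koszul_of_dotProduct_eq_zero {u v w : n → R} (hu : u ⬝ᵥ v = 1)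
    (hw : w ⬝ᵥ v = 0) :
    w = ∑ t : n × n, (u t.1 * w t.2) • (v t.1 • Pi.single t.2 1 - v t.2 • Pi.single t.1 1) := by
  ext m
  simp only [dotProduct] at hu hw
  simp only [Finset.sum_apply, Pi.smul_apply, Pi.sub_apply, Pi.single_apply, smul_eq_mul, mul_ite,
    mul_one, mul_zero, mul_sub, Finset.sum_sub_distrib, Fintype.sum_prod_type, Finset.sum_ite_eq,
    Finset.mem_univ, if_true, Finset.sum_ite_irrel, Finset.sum_const_zero]
  simp_rw [mul_right_comm (u _) (w m), ← Finset.sum_mul, mul_assoc (u m), ← Finset.mul_sum, hu,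
    hw, one_mul, mul_zero, sub_zero]

end Vectors

section Elementary

variable {R : Type*} [CommRing R] {N : ℕ} {I : Ideal R}

theorem transvection_mem_elementarySubgroup {i j : Fin N} (hij : i ≠ j) {c : R} (hc : c ∈ I) :
    transvection i j c ∈ (elementarySubgroup R N I).valSubmonoid :=
  Subgroup.val_mem_valSubmonoid (g := transvectionGL R N i j hij c)
    (Subgroup.subset_closure ⟨i, j, hij, c, hc, rfl⟩)

theorem one_add_vecMulVec_single_mem_elementarySubgroup (p : Fin N) (x : R) {w : Fin N → R}
    (hxp : x * w p = 0) (hw : ∀ q, w q ∈ I) :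
    1 + vecMulVec (Pi.single p x) w ∈ (elementarySubgroup R N I).valSubmonoid := by
  have hrow : vecMulVec (Pi.single p x) w = ∑ q, single p q (x * w q) := by
    ext a b
    simp [vecMulVec_apply, Matrix.sum_apply, single_apply, Pi.single_apply, ite_and, eq_comm]
  rw [hrow]
  refine one_add_sum_mem_of_mul_eq_zero _ _ (fun q _ q' _ => ?_) fun q _ => ?_
  · rcases eq_or_ne q p with rfl | hqp
    · rw [hxp, single_zero, zero_mul]
    · exact single_mul_single_of_ne _ p q p hqp _
  · rcases eq_or_ne p q with rfl | hpq
    · simp [hxp]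
    · exact transvection_mem_elementarySubgroup hpq (I.mul_mem_left x (hw q))

theorem one_add_vecMulVec_mem_elementarySubgroup {v w : Fin N → R} (hvw : ∀ q, v q * w q = 0)
    (hw : ∀ q, w q ∈ I) :
    1 + vecMulVec v w ∈ (elementarySubgroup R N I).valSubmonoid := by
  have hrows : vecMulVec v w = ∑ p, vecMulVec (Pi.single p (v p)) w := by
    ext a b
    simp [vecMulVec_apply, Matrix.sum_apply, Pi.single_apply]
  rw [hrows]
  refine one_add_sum_mem_of_mul_eq_zero _ _ (fun p _ q _ => ?_) fun p _ =>
    one_add_vecMulVec_single_mem_elementarySubgroup p (v p) (hvw p) hw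
  rw [vecMulVec_mul_vecMulVec, dotProduct_single, mul_comm, hvw, zero_smul, vecMulVec_zero]

theorem elementarySubgroup_le_relativeElementarySubgroup :
    elementarySubgroup R N I ≤ relativeElementarySubgroup R N I :=
  fun e he => Subgroup.subset_closure ⟨e, he, 1, one_mem _, by group⟩

theorem one_add_mul_mem_relativeElementarySubgroup {X Y : Matrix (Fin N) (Fin N) R}
    (hX : 1 + X ∈ (elementarySubgroup R N I).valSubmonoid)
    (hX' : 1 - X ∈ (elementarySubgroup R N I).valSubmonoid)
    (hY : 1 + Y ∈ (elementarySubgroup R N ⊤).valSubmonoid)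
    (hXX : X * X = 0) (hYY : Y * Y = 0) (hYX : Y * X = 0) :
    1 + X * Y ∈ (relativeElementarySubgroup R N I).valSubmonoid := by
  obtain ⟨x, hx, hxX⟩ := Subgroup.mem_valSubmonoid.mp hX
  obtain ⟨x', hx', hx'X⟩ := Subgroup.mem_valSubmonoid.mp hX'
  obtain ⟨y, hy, hyY⟩ := Subgroup.mem_valSubmonoid.mp hY
  have hyinv : ((y⁻¹ : GL (Fin N) R) : Matrix (Fin N) (Fin N) R) = 1 - Y := by
    refine Units.inv_eq_of_mul_eq_one_right ?_
    simp [hyY, mul_sub, add_mul, hYY]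
  have hval : ((x * (y * x' * y⁻¹) : GL (Fin N) R) : Matrix (Fin N) (Fin N) R) = 1 + X * Y := by
    rw [← commutator_one_add_one_add hXX hYY hYX]
    simp only [Units.val_mul, hxX, hyY, hx'X, hyinv, mul_assoc]
  rw [← hval]
  exact Subgroup.val_mem_valSubmonoid (mul_mem (elementarySubgroup_le_relativeElementarySubgroup hx)
    (Subgroup.subset_closure ⟨x', hx', y, hy, rfl⟩))

theorem one_add_vecMulVec_smul_mem_relativeElementarySubgroup {s r : Fin N → R} {k : Fin N}
    (hsk : s k = 0) (hrk : r k = 0) (hrs : r ⬝ᵥ s = 0) {b : R} (hb : b ∈ I) :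
    1 + vecMulVec s (b • r) ∈ (relativeElementarySubgroup R N I).valSubmonoid := by
  have hXY : vecMulVec s (b • Pi.single k 1) * vecMulVec (Pi.single k 1) r =
      vecMulVec s (b • r) := by
    simp [vecMulVec_mul_vecMulVec]
  have hsupp : ∀ c : R, ∀ q, s q * (c • Pi.single k 1 : Fin N → R) q = 0 := by
    intro c q
    rcases eq_or_ne q k with rfl | hqk
    · rw [hsk, zero_mul]
    · simp [Pi.single_eq_of_ne hqk]
  rw [← hXY]
  refine one_add_mul_mem_relativeElementarySubgroup
    (one_add_vecMulVec_mem_elementarySubgroup (hsupp b) fun q => I.mul_mem_right _ hb)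
    ?_ ?_ ?_ ?_ ?_
  · rw [sub_eq_add_neg, ← vecMulVec_neg, ← neg_smul]
    exact one_add_vecMulVec_mem_elementarySubgroup (hsupp (-b))
      fun q => I.mul_mem_right _ (I.neg_mem_iff.mpr hb)
  · refine one_add_vecMulVec_mem_elementarySubgroup (fun q => ?_) fun _ => Submodule.mem_top
    rcases eq_or_ne q k with rfl | hqk
    · rw [hrk, mul_zero]
    · rw [Pi.single_eq_of_ne hqk, zero_mul]
  · rw [vecMulVec_mul_vecMulVec, smul_dotProduct, single_dotProduct, one_mul, hsk, smul_zero,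
      zero_smul, vecMulVec_zero]
  · rw [vecMulVec_mul_vecMulVec, dotProduct_single, hrk, zero_mul, zero_smul, vecMulVec_zero]
  · rw [vecMulVec_mul_vecMulVec, hrs, zero_smul, vecMulVec_zero]

theorem one_add_vecMulVec_koszul_mem_relativeElementarySubgroup (hN : 3 ≤ N) (v : Fin N → R)
    {b : R} (hb : b ∈ I) {i j : Fin N} (hij : i ≠ j) :
    1 + vecMulVec v (b • (v i • Pi.single j 1 - v j • Pi.single i 1)) ∈
      (relativeElementarySubgroup R N I).valSubmonoid := by
  obtain ⟨k, hki, hkj⟩ := Fin.exists_ne_and_ne_of_two_lt i j hN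
  set r : Fin N → R := v i • Pi.single j 1 - v j • Pi.single i 1
  set s : Fin N → R := Pi.single i (v i) + Pi.single j (v j)
  have hrs : r ⬝ᵥ s = 0 := by
    simp only [r, s, sub_dotProduct, smul_dotProduct, single_dotProduct, Pi.add_apply,
      Pi.single_eq_same, Pi.single_eq_of_ne hij, Pi.single_eq_of_ne hij.symm, smul_eq_mul]
    ring
  have hsplit : 1 + vecMulVec v (b • r) =
      (1 + vecMulVec (v - s) (b • r)) * (1 + vecMulVec s (b • r)) := by
    rw [mul_add, mul_one, add_mul, one_mul, vecMulVec_mul_vecMulVec, smul_dotProduct, hrs,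
      smul_zero, zero_smul, vecMulVec_zero, add_zero, add_assoc, ← add_vecMulVec, sub_add_cancel]
  have hsupp : ∀ q, (v - s) q * (b • r) q = 0 := by
    intro q
    rcases eq_or_ne q i with rfl | hqi
    · simp [s, Pi.single_eq_of_ne hij]
    rcases eq_or_ne q j with rfl | hqj
    · simp [s, Pi.single_eq_of_ne hij.symm]
    simp [r, Pi.single_eq_of_ne hqi, Pi.single_eq_of_ne hqj]
  rw [hsplit]
  refine mul_mem (Subgroup.valSubmonoid_mono elementarySubgroup_le_relativeElementarySubgroup
    (one_add_vecMulVec_mem_elementarySubgroup hsupp fun q => I.mul_mem_right _ hb))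
    (one_add_vecMulVec_smul_mem_relativeElementarySubgroup (k := k) ?_ ?_ hrs hb)
  · simp [s, Pi.single_eq_of_ne hki, Pi.single_eq_of_ne hkj]
  · simp [r, Pi.single_eq_of_ne hki, Pi.single_eq_of_ne hkj]

theorem one_add_vecMulVec_mem_relativeElementarySubgroup (hN : 3 ≤ N) {u v w : Fin N → R}
    (hu : u ⬝ᵥ v = 1) (hw : w ⬝ᵥ v = 0) (hwI : ∀ q, w q ∈ I) :
    1 + vecMulVec v w ∈ (relativeElementarySubgroup R N I).valSubmonoid := by
  rw [eq_sum_koszul_of_dotProduct_eq_zero hu hw, vecMulVec_sum]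
  refine one_add_sum_mem_of_mul_eq_zero _ _ (fun t _ t' _ => ?_) fun t _ => ?_
  · rw [vecMulVec_mul_vecMulVec, smul_dotProduct, dotProduct_koszul_eq_zero, smul_zero,
      zero_smul, vecMulVec_zero]
  · rcases eq_or_ne t.1 t.2 with h | h
    · simp [h]
    · exact one_add_vecMulVec_koszul_mem_relativeElementarySubgroup hN v
        (I.mul_mem_left _ (hwI t.2)) h

theorem conj_transvectionGL_mem_relativeElementarySubgroup (hN : 3 ≤ N) (g : GL (Fin N) R)
    {i j : Fin N} (hij : i ≠ j) {c : R} (hc : c ∈ I) :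
    g * transvectionGL R N i j hij c * g⁻¹ ∈ relativeElementarySubgroup R N I := by
  refine Subgroup.mem_of_val_mem_valSubmonoid ?_
  rw [Units.val_mul, Units.val_mul]
  change _ * transvection i j c * _ ∈ _
  rw [mul_transvection_mul_eq g.mul_inv]
  refine one_add_vecMulVec_mem_relativeElementarySubgroup hN (u := Pi.single i 1 ᵥ* ↑g⁻¹) ?_ ?_
    fun q => I.mul_mem_right _ hc
  · rw [dotProduct_mulVec, vecMul_vecMul, Units.inv_mul, vecMul_one, single_dotProduct,
      Pi.single_eq_same, one_mul]
  · rw [smul_dotProduct, dotProduct_mulVec, vecMul_vecMul, Units.inv_mul, vecMul_one,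
      single_dotProduct, Pi.single_eq_of_ne hij.symm, mul_zero, smul_zero]

theorem conj_mem_relativeElementarySubgroup (hN : 3 ≤ N) {e : GL (Fin N) R}
    (he : e ∈ elementarySubgroup R N I) (g : GL (Fin N) R) :
    g * e * g⁻¹ ∈ relativeElementarySubgroup R N I := by
  suffices elementarySubgroup R N I ≤
      (relativeElementarySubgroup R N I).comap (MulAut.conj g).toMonoidHom from this he
  refine (Subgroup.closure_le _).mpr ?_
  rintro _ ⟨i, j, hij, c, hc, rfl⟩
  exact conj_transvectionGL_mem_relativeElementarySubgroup hN g hij hc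

end Elementary

/-- The relative elementary subgroup `E(n,R,I)` is normal in `GL(n,R)` for `n ≥ 3`. -/
theorem relativeElementarySubgroup_normal
    (R : Type*) [CommRing R] (N : ℕ) (hN : 3 ≤ N) (I : Ideal R) :
    (relativeElementarySubgroup R N I).Normal := by
  refine ⟨fun x hx g => ?_⟩
  suffices relativeElementarySubgroup R N I ≤
      (relativeElementarySubgroup R N I).comap (MulAut.conj g).toMonoidHom from this hx
  refine (Subgroup.closure_le _).mpr ?_
  rintro _ ⟨e, he, u, -, rfl⟩
  have hconj : g * (u * e * u⁻¹) * g⁻¹ = (g * u) * e * (g * u)⁻¹ := by group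
  show g * (u * e * u⁻¹) * g⁻¹ ∈ relativeElementarySubgroup R N I
  rw [hconj]
  exact conj_mem_relativeElementarySubgroup hN he (g * u)
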